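/- Let φ be a restricted 3-SAT formula (every clause has 2 or 3 literals, every variable occurs at most twice unnegated and at most twice negated) with ℓ ≥ 1 variables and k ≥ 1 clauses, and let p ∈ (0,1). If the malicious Bayesian congestion game Γ_a(φ,p) possesses a pure Bayesian Nash equilibrium, then φ is satisfiable. -/
import Mathlib


open Finset

/-- The data of a malicious Bayesian congestion game: strategy sets (sets of
nonempty subsets of resources), type probabilities, latency functions. -/
structure Game (N E : Type) where
  S : N → Finset (Finset E)
  p : N → ℝ
  f : E → ℝ → ℝ

namespace Game

variable {N E : Type} [Fintype N] [DecidableEq N] [Fintype E] [DecidableEq E]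

/-- A pure strategy profile: each player chooses a pair (selfish strategy, malicious strategy). -/
abbrev Profile (N E : Type) := N → Finset E × Finset E

/-- Validity: both type-agents of each player choose strategies from the player's strategy set. -/
def Valid (G : Game N E) (σ : Profile N E) : Prop :=
  ∀ u, (σ u).1 ∈ G.S u ∧ (σ u).2 ∈ G.S u

/-- Expected selfish load on resource `e`, with player `u` omitted. -/
noncomputable def selfLoadEx (G : Game N E) (σ : Profile N E) (u : N) (e : E) : ℝ :=
  ∑ v ∈ Finset.univ.erase u, if e ∈ (σ v).1 then 1 - G.p v else 0

/-- Expected malicious load on resource `e`, with player `u` omitted. -/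
noncomputable def malLoadEx (G : Game N E) (σ : Profile N E) (u : N) (e : E) : ℝ :=
  ∑ v ∈ Finset.univ.erase u, if e ∈ (σ v).2 then G.p v else 0

/-- Private (expected) cost of player `u` in the pure profile `σ`. -/
noncomputable def PC (G : Game N E) (σ : Profile N E) (u : N) : ℝ :=
  ∑ e ∈ (σ u).1, G.f e (G.selfLoadEx σ u e + G.malLoadEx σ u e + 1)

/-- Social cost of a pure profile: weighted average latency of the selfish type-agents. -/
noncomputable def SC (G : Game N E) (σ : Profile N E) : ℝ :=
  (∑ u, (1 - G.p u) * G.PC σ u) / ((Fintype.card N : ℝ) - ∑ u, G.p u)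

/-- Replace the selfish strategy of player `u` by `t`. -/
def updS (σ : Profile N E) (u : N) (t : Finset E) : Profile N E :=
  Function.update σ u (t, (σ u).2)

/-- Replace the malicious strategy of player `u` by `t`. -/
def updM (σ : Profile N E) (u : N) (t : Finset E) : Profile N E :=
  Function.update σ u ((σ u).1, t)

/-- Pure Bayesian Nash equilibrium: no selfish type-agent can decrease its private cost and
no malicious type-agent can increase the social cost by a unilateral deviation. -/
def IsPureBNE (G : Game N E) (σ : Profile N E) : Prop :=
  G.Valid σ ∧ ∀ u : N, ∀ t ∈ G.S u,
    G.PC σ u ≤ G.PC (updS σ u t) u ∧ G.SC (updM σ u t) ≤ G.SC σ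

end Game
/-- A CNF formula with `l` variables and `k` clauses. A literal is a pair `(x, b)`
where `b = true` means the variable `x` occurs unnegated and `b = false` negated. -/
structure Formula (l k : ℕ) where
  C : Fin k → Finset (Fin l × Bool)

/-- Restricted 3-SAT: every clause has 2 or 3 literals and every variable occurs
at most twice unnegated and at most twice negated. -/
def Formula.Restricted {l k : ℕ} (φ : Formula l k) : Prop :=
  (∀ j, (φ.C j).card = 2 ∨ (φ.C j).card = 3) ∧
  ∀ (x : Fin l) (b : Bool), (Finset.univ.filter fun j => (x, b) ∈ φ.C j).card ≤ 2

/-- Satisfiability of the formula. -/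
def Formula.Satisfiable {l k : ℕ} (φ : Formula l k) : Prop :=
  ∃ v : Fin l → Bool, ∀ j, ∃ lit ∈ φ.C j, v lit.1 = lit.2
/-- Resources of the game `Γ_a(φ,p)`: `e0,…,e4` together with `e_x^0` (`ev x false`)
and `e_x^1` (`ev x true`) for each variable `x`. -/
inductive ResA (l : ℕ) where
  | e0 | e1 | e2 | e3 | e4
  | ev (x : Fin l) (b : Bool)
deriving DecidableEq, Fintype

/-- Players of the game `Γ_a(φ,p)`. -/
inductive PlA (l k : ℕ) where
  | u0 | u1 | u2
  | uvar (x : Fin l)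
  | ucl (j : Fin k)
deriving DecidableEq, Fintype

/-- The malicious Bayesian congestion game `Γ_a(φ,p)` from part (a) of the reduction. -/
noncomputable def GammaA {l k : ℕ} (φ : Formula l k) (p : ℝ) : Game (PlA l k) (ResA l) where
  S := fun u => match u with
    | .u0 => {{ResA.e0}}
    | .u1 => {{ResA.e1}, {ResA.e2}, {ResA.e3}}
    | .u2 => {{ResA.e0}, {ResA.e1}, {ResA.e2}, {ResA.e3}, {ResA.e4}}
    | .uvar x => {{ResA.e0}, {ResA.e4}, {ResA.ev x false}, {ResA.ev x true}}
    | .ucl j => insert {ResA.e0} ((φ.C j).image fun lit => {ResA.ev lit.1 lit.2})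
  p := fun _ => p
  f := fun e x => match e with
    | .e0 => ((l : ℝ) + 1) * x
    | .ev _ _ => (2 - p) * x
    | _ => x


section AuxGeneric
set_option linter.unusedSectionVars false

variable {N E : Type} [Fintype N] [DecidableEq N] [Fintype E] [DecidableEq E]

lemma updS_apply_ne (σ : Game.Profile N E) (u v : N) (t : Finset E) (h : v ≠ u) :
    Game.updS σ u t v = σ v := Function.update_of_ne h _ _

lemma updM_fst (σ : Game.Profile N E) (u : N) (t : Finset E) (v : N) :
    (Game.updM σ u t v).1 = (σ v).1 := by
  unfold Game.updM
  rcases eq_or_ne v u with rfl | h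
  · rw [Function.update_self]
  · rw [Function.update_of_ne h]

lemma selfLoadEx_updS (G : Game N E) (σ : Game.Profile N E) (u : N) (t : Finset E) (e : E) :
    G.selfLoadEx (Game.updS σ u t) u e = G.selfLoadEx σ u e := by
  unfold Game.selfLoadEx
  refine Finset.sum_congr rfl fun v hv => ?_
  rw [updS_apply_ne σ u v t (Finset.ne_of_mem_erase hv)]

lemma malLoadEx_updS (G : Game N E) (σ : Game.Profile N E) (u : N) (t : Finset E) (e : E) :
    G.malLoadEx (Game.updS σ u t) u e = G.malLoadEx σ u e := by
  unfold Game.malLoadEx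
  refine Finset.sum_congr rfl fun v hv => ?_
  rw [updS_apply_ne σ u v t (Finset.ne_of_mem_erase hv)]

lemma PC_updS (G : Game N E) (σ : Game.Profile N E) (u : N) (t : Finset E) :
    G.PC (Game.updS σ u t) u
      = ∑ e ∈ t, G.f e (G.selfLoadEx σ u e + G.malLoadEx σ u e + 1) := by
  unfold Game.PC
  have h1 : Game.updS σ u t u = (t, (σ u).2) := Function.update_self _ _ _
  rw [h1]
  exact Finset.sum_congr rfl fun e _ => by rw [selfLoadEx_updS, malLoadEx_updS]

lemma selfLoadEx_updM (G : Game N E) (σ : Game.Profile N E) (u : N) (t : Finset E) (w : N) (e : E) :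
    G.selfLoadEx (Game.updM σ u t) w e = G.selfLoadEx σ w e := by
  unfold Game.selfLoadEx
  exact Finset.sum_congr rfl fun v hv => by rw [updM_fst]

lemma malLoadEx_updM_self (G : Game N E) (σ : Game.Profile N E) (u : N) (t : Finset E) (e : E) :
    G.malLoadEx (Game.updM σ u t) u e = G.malLoadEx σ u e := by
  unfold Game.malLoadEx
  refine Finset.sum_congr rfl fun v hv => ?_
  have : Game.updM σ u t v = σ v := Function.update_of_ne (Finset.ne_of_mem_erase hv) _ _
  rw [this]

lemma PC_updM_self (G : Game N E) (σ : Game.Profile N E) (u : N) (t : Finset E) :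
    G.PC (Game.updM σ u t) u = G.PC σ u := by
  unfold Game.PC
  rw [show ((Game.updM σ u t u).1 : Finset E) = (σ u).1 from updM_fst σ u t u]
  exact Finset.sum_congr rfl fun e _ => by rw [selfLoadEx_updM, malLoadEx_updM_self]

lemma malLoadEx_updM_other (G : Game N E) (σ : Game.Profile N E) (u : N) (t : Finset E)
    (v : N) (hvu : v ≠ u) (e : E) :
    G.malLoadEx (Game.updM σ u t) v e
      = G.malLoadEx σ v e
        + G.p u * ((if e ∈ t then 1 else 0) - (if e ∈ (σ u).2 then 1 else 0)) := by
  unfold Game.malLoadEx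
  have hu : u ∈ Finset.univ.erase v := Finset.mem_erase.2 ⟨hvu.symm, Finset.mem_univ u⟩
  rw [← Finset.add_sum_erase _ (fun w => if e ∈ (Game.updM σ u t w).2 then G.p w else 0) hu,
      ← Finset.add_sum_erase _ (fun w => if e ∈ (σ w).2 then G.p w else 0) hu]
  have hrest : ∑ w ∈ (Finset.univ.erase v).erase u,
      (if e ∈ (Game.updM σ u t w).2 then G.p w else 0)
      = ∑ w ∈ (Finset.univ.erase v).erase u, (if e ∈ (σ w).2 then G.p w else 0) := by
    refine Finset.sum_congr rfl fun w hw => ?_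
    have : Game.updM σ u t w = σ w := Function.update_of_ne (Finset.ne_of_mem_erase hw) _ _
    rw [this]
  rw [hrest]
  have hself : (Game.updM σ u t u).2 = t := by
    unfold Game.updM; rw [Function.update_self]
  rw [hself]
  split_ifs <;> ring

lemma SC_updM_singleton (G : Game N E) (a : E → ℝ) (ha : ∀ e x, G.f e x = a e * x)
    (σ : Game.Profile N E) (u : N) (d e' : E) (hold : (σ u).2 = {d}) :
    G.SC (Game.updM σ u {e'}) = G.SC σ +
      (∑ v ∈ Finset.univ.erase u, (1 - G.p v) * (G.p u *
        ((if e' ∈ (σ v).1 then a e' else 0) - (if d ∈ (σ v).1 then a d else 0)))) /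
      ((Fintype.card N : ℝ) - ∑ w, G.p w) := by
  unfold Game.SC
  rw [← add_div]
  congr 1
  rw [← Finset.add_sum_erase _ (fun v => (1 - G.p v) * G.PC (Game.updM σ u {e'}) v) (Finset.mem_univ u),
      ← Finset.add_sum_erase _ (fun v => (1 - G.p v) * G.PC σ v) (Finset.mem_univ u),
      PC_updM_self, add_assoc]
  congr 1
  rw [← Finset.sum_add_distrib]
  refine Finset.sum_congr rfl fun v hv => ?_
  have hvu : v ≠ u := Finset.ne_of_mem_erase hv
  have hPC : G.PC (Game.updM σ u {e'}) v = G.PC σ v +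
      G.p u * ((if e' ∈ (σ v).1 then a e' else 0) - (if d ∈ (σ v).1 then a d else 0)) := by
    unfold Game.PC
    rw [updM_fst]
    have hterm : ∀ e ∈ (σ v).1,
        G.f e (G.selfLoadEx (Game.updM σ u {e'}) v e + G.malLoadEx (Game.updM σ u {e'}) v e + 1)
          = G.f e (G.selfLoadEx σ v e + G.malLoadEx σ v e + 1)
            + G.p u * ((if e = e' then a e' else 0) - (if e = d then a d else 0)) := by
      intro e _
      rw [selfLoadEx_updM, malLoadEx_updM_other G σ u {e'} v hvu, ha, ha, hold]
      simp only [Finset.mem_singleton]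
      split_ifs with h1 h2 h2
      · subst h1; subst h2; ring
      · subst h1; ring
      · subst h2; ring
      · ring
    rw [Finset.sum_congr rfl hterm, Finset.sum_add_distrib, ← Finset.mul_sum,
        Finset.sum_sub_distrib,
        Finset.sum_ite_eq' (σ v).1 e' (fun _ => a e'),
        Finset.sum_ite_eq' (σ v).1 d (fun _ => a d)]
  rw [hPC]; ring

lemma sum_indicator_le (u : N) (f : N → ℝ) (P : N → Prop) [DecidablePred P]
    (T : Finset N) (c : ℝ) (h : ∀ v, v ≠ u → P v → v ∈ T)
    (hf : ∀ v, f v ≤ c) (hc : 0 ≤ c) :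
    ∑ v ∈ Finset.univ.erase u, (if P v then f v else 0) ≤ T.card * c := by
  calc ∑ v ∈ Finset.univ.erase u, (if P v then f v else 0)
      ≤ ∑ v ∈ Finset.univ.erase u, (if v ∈ T then c else 0) := by
        refine Finset.sum_le_sum fun v hv => ?_
        have hvu : v ≠ u := Finset.ne_of_mem_erase hv
        by_cases hP : P v
        · rw [if_pos hP, if_pos (h v hvu hP)]; exact hf v
        · rw [if_neg hP]; split_ifs
          · exact hc
          · exact le_refl 0
    _ ≤ ∑ v ∈ Finset.univ, (if v ∈ T then c else 0) := by
        refine Finset.sum_le_sum_of_subset_of_nonneg (Finset.erase_subset _ _) fun v _ _ => ?_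
        split_ifs
        · exact hc
        · exact le_refl 0
    _ = T.card * c := by
        rw [Finset.sum_ite_mem, Finset.univ_inter, Finset.sum_const, nsmul_eq_mul]

end AuxGeneric


section AuxGamma

set_option linter.unusedSectionVars false

variable {l k : ℕ} {φ : Formula l k} {p : ℝ}

lemma GammaA_p (v : PlA l k) : (GammaA φ p).p v = p := rfl

lemma GammaA_S_u0 : (GammaA φ p).S PlA.u0 = {{ResA.e0}} := rfl
lemma GammaA_S_u1 : (GammaA φ p).S PlA.u1 = {{ResA.e1}, {ResA.e2}, {ResA.e3}} := rfl
lemma GammaA_S_u2 :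
    (GammaA φ p).S PlA.u2 = {{ResA.e0}, {ResA.e1}, {ResA.e2}, {ResA.e3}, {ResA.e4}} := rfl
lemma GammaA_S_uvar (x : Fin l) :
    (GammaA φ p).S (PlA.uvar x)
      = {{ResA.e0}, {ResA.e4}, {ResA.ev x false}, {ResA.ev x true}} := rfl
lemma GammaA_S_ucl (j : Fin k) :
    (GammaA φ p).S (PlA.ucl j)
      = insert {ResA.e0} ((φ.C j).image fun lit => {ResA.ev lit.1 lit.2}) := rfl

noncomputable def aGA (l : ℕ) (p : ℝ) : ResA l → ℝ
  | .e0 => (l : ℝ) + 1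
  | .ev _ _ => 2 - p
  | _ => 1

lemma GammaA_f (e : ResA l) (x : ℝ) : (GammaA φ p).f e x = aGA l p e * x := by
  cases e <;> simp [GammaA, aGA]

/-- Only `u1` and `u2` can ever put an agent on `e1`, `e2`, `e3`. -/
lemma users_e123 {σ : Game.Profile (PlA l k) (ResA l)} (hval : (GammaA φ p).Valid σ)
    {e : ResA l} (he : e = ResA.e1 ∨ e = ResA.e2 ∨ e = ResA.e3) (v : PlA l k)
    (hv : e ∈ (σ v).1 ∨ e ∈ (σ v).2) : v = PlA.u1 ∨ v = PlA.u2 := by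
  obtain ⟨h1, h2⟩ := hval v
  rcases v with _ | _ | _ | x | j
  · exfalso
    rw [GammaA_S_u0, Finset.mem_singleton] at h1 h2
    rcases hv with hv | hv
    · rw [h1, Finset.mem_singleton] at hv; obtain rfl | rfl | rfl := he <;> simp_all
    · rw [h2, Finset.mem_singleton] at hv; obtain rfl | rfl | rfl := he <;> simp_all
  · exact Or.inl rfl
  · exact Or.inr rfl
  · exfalso
    rw [GammaA_S_uvar] at h1 h2
    simp only [Finset.mem_insert, Finset.mem_singleton] at h1 h2
    rcases hv with hv | hv
    · rcases h1 with h1 | h1 | h1 | h1 <;> rw [h1, Finset.mem_singleton] at hv <;>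
        obtain rfl | rfl | rfl := he <;> simp_all
    · rcases h2 with h2 | h2 | h2 | h2 <;> rw [h2, Finset.mem_singleton] at hv <;>
        obtain rfl | rfl | rfl := he <;> simp_all
  · exfalso
    rw [GammaA_S_ucl] at h1 h2
    simp only [Finset.mem_insert, Finset.mem_image] at h1 h2
    rcases hv with hv | hv
    · rcases h1 with h1 | ⟨a, _, h1⟩
      · rw [h1, Finset.mem_singleton] at hv; obtain rfl | rfl | rfl := he <;> simp_all
      · rw [← h1, Finset.mem_singleton] at hv; obtain rfl | rfl | rfl := he <;> simp_all
    · rcases h2 with h2 | ⟨a, _, h2⟩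
      · rw [h2, Finset.mem_singleton] at hv; obtain rfl | rfl | rfl := he <;> simp_all
      · rw [← h2, Finset.mem_singleton] at hv; obtain rfl | rfl | rfl := he <;> simp_all

/-- Only `u2` and the variable players can ever put an agent on `e4`. -/
lemma users_e4 {σ : Game.Profile (PlA l k) (ResA l)} (hval : (GammaA φ p).Valid σ)
    (v : PlA l k) (hv : ResA.e4 ∈ (σ v).1 ∨ ResA.e4 ∈ (σ v).2) :
    v = PlA.u2 ∨ ∃ x, v = PlA.uvar x := by
  obtain ⟨h1, h2⟩ := hval v
  rcases v with _ | _ | _ | x | j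
  · exfalso
    rw [GammaA_S_u0, Finset.mem_singleton] at h1 h2
    rcases hv with hv | hv
    · rw [h1, Finset.mem_singleton] at hv; simp_all
    · rw [h2, Finset.mem_singleton] at hv; simp_all
  · exfalso
    rw [GammaA_S_u1] at h1 h2
    simp only [Finset.mem_insert, Finset.mem_singleton] at h1 h2
    rcases hv with hv | hv
    · rcases h1 with h1 | h1 | h1 <;> rw [h1, Finset.mem_singleton] at hv <;> simp_all
    · rcases h2 with h2 | h2 | h2 <;> rw [h2, Finset.mem_singleton] at hv <;> simp_all
  · exact Or.inl rfl
  · exact Or.inr ⟨x, rfl⟩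
  · exfalso
    rw [GammaA_S_ucl] at h1 h2
    simp only [Finset.mem_insert, Finset.mem_image] at h1 h2
    rcases hv with hv | hv
    · rcases h1 with h1 | ⟨a, _, h1⟩
      · rw [h1, Finset.mem_singleton] at hv; simp_all
      · rw [← h1, Finset.mem_singleton] at hv; simp_all
    · rcases h2 with h2 | ⟨a, _, h2⟩
      · rw [h2, Finset.mem_singleton] at hv; simp_all
      · rw [← h2, Finset.mem_singleton] at hv; simp_all

/-- Only `uvar x` and clause players of clauses containing the literal `(x,b)` can
ever put an agent on `ev x b`. -/
lemma users_ev {σ : Game.Profile (PlA l k) (ResA l)} (hval : (GammaA φ p).Valid σ)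
    (x : Fin l) (b : Bool) (v : PlA l k)
    (hv : ResA.ev x b ∈ (σ v).1 ∨ ResA.ev x b ∈ (σ v).2) :
    v = PlA.uvar x ∨ ∃ j, v = PlA.ucl j ∧ (x, b) ∈ φ.C j := by
  obtain ⟨h1, h2⟩ := hval v
  rcases v with _ | _ | _ | y | j
  · exfalso
    rw [GammaA_S_u0, Finset.mem_singleton] at h1 h2
    rcases hv with hv | hv
    · rw [h1, Finset.mem_singleton] at hv; simp_all
    · rw [h2, Finset.mem_singleton] at hv; simp_all
  · exfalso
    rw [GammaA_S_u1] at h1 h2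
    simp only [Finset.mem_insert, Finset.mem_singleton] at h1 h2
    rcases hv with hv | hv
    · rcases h1 with h1 | h1 | h1 <;> rw [h1, Finset.mem_singleton] at hv <;> simp_all
    · rcases h2 with h2 | h2 | h2 <;> rw [h2, Finset.mem_singleton] at hv <;> simp_all
  · exfalso
    rw [GammaA_S_u2] at h1 h2
    simp only [Finset.mem_insert, Finset.mem_singleton] at h1 h2
    rcases hv with hv | hv
    · rcases h1 with h1 | h1 | h1 | h1 | h1 <;> rw [h1, Finset.mem_singleton] at hv <;> simp_all
    · rcases h2 with h2 | h2 | h2 | h2 | h2 <;> rw [h2, Finset.mem_singleton] at hv <;> simp_all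
  · left
    rw [GammaA_S_uvar] at h1 h2
    simp only [Finset.mem_insert, Finset.mem_singleton] at h1 h2
    rcases hv with hv | hv
    · rcases h1 with h1 | h1 | h1 | h1 <;> rw [h1, Finset.mem_singleton] at hv <;> simp_all
    · rcases h2 with h2 | h2 | h2 | h2 <;> rw [h2, Finset.mem_singleton] at hv <;> simp_all
  · right
    refine ⟨j, rfl, ?_⟩
    rw [GammaA_S_ucl] at h1 h2
    simp only [Finset.mem_insert, Finset.mem_image] at h1 h2
    rcases hv with hv | hv
    · rcases h1 with h1 | ⟨a, ha, h1⟩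
      · rw [h1, Finset.mem_singleton] at hv; simp_all
      · rw [← h1, Finset.mem_singleton, ResA.ev.injEq] at hv
        obtain ⟨rfl, rfl⟩ := hv
        simpa using ha
    · rcases h2 with h2 | ⟨a, ha, h2⟩
      · rw [h2, Finset.mem_singleton] at hv; simp_all
      · rw [← h2, Finset.mem_singleton, ResA.ev.injEq] at hv
        obtain ⟨rfl, rfl⟩ := hv
        simpa using ha

end AuxGamma


section AuxSteps

set_option linter.unusedSectionVars false
set_option maxHeartbeats 1000000

variable {l k : ℕ} {φ : Formula l k} {p : ℝ}

lemma selfLoad_nonneg (hp1 : p < 1) (σ : Game.Profile (PlA l k) (ResA l)) (u : PlA l k)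
    (e : ResA l) : 0 ≤ (GammaA φ p).selfLoadEx σ u e := by
  unfold Game.selfLoadEx
  refine Finset.sum_nonneg fun v _ => ?_
  simp only [GammaA_p]; split_ifs <;> linarith

lemma malLoad_nonneg (hp0 : 0 < p) (σ : Game.Profile (PlA l k) (ResA l)) (u : PlA l k)
    (e : ResA l) : 0 ≤ (GammaA φ p).malLoadEx σ u e := by
  unfold Game.malLoadEx
  refine Finset.sum_nonneg fun v _ => ?_
  simp only [GammaA_p]; split_ifs <;> linarith

lemma single_le_selfLoad (hp1 : p < 1) {σ : Game.Profile (PlA l k) (ResA l)} {u : PlA l k}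
    {e : ResA l} {w : PlA l k} (hw : w ≠ u) (he : e ∈ (σ w).1) :
    1 - p ≤ (GammaA φ p).selfLoadEx σ u e := by
  unfold Game.selfLoadEx
  have hmem : w ∈ Finset.univ.erase u := Finset.mem_erase.2 ⟨hw, Finset.mem_univ w⟩
  have h := Finset.single_le_sum
    (f := fun v => if e ∈ (σ v).1 then 1 - (GammaA φ p).p v else 0)
    (fun v _ => by simp only [GammaA_p]; split_ifs <;> linarith) hmem
  simpa only [GammaA_p, he, if_true] using h

lemma single_le_malLoad (hp0 : 0 < p) {σ : Game.Profile (PlA l k) (ResA l)} {u : PlA l k}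
    {e : ResA l} {w : PlA l k} (hw : w ≠ u) (he : e ∈ (σ w).2) :
    p ≤ (GammaA φ p).malLoadEx σ u e := by
  unfold Game.malLoadEx
  have hmem : w ∈ Finset.univ.erase u := Finset.mem_erase.2 ⟨hw, Finset.mem_univ w⟩
  have h := Finset.single_le_sum
    (f := fun v => if e ∈ (σ v).2 then (GammaA φ p).p v else 0)
    (fun v _ => by simp only [GammaA_p]; split_ifs <;> linarith) hmem
  simpa only [GammaA_p, he, if_true] using h

lemma PC_singleton {σ : Game.Profile (PlA l k) (ResA l)} {u : PlA l k} {e : ResA l}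
    (hu : (σ u).1 = {e}) :
    (GammaA φ p).PC σ u
      = aGA l p e * ((GammaA φ p).selfLoadEx σ u e + (GammaA φ p).malLoadEx σ u e + 1) := by
  unfold Game.PC
  rw [hu, Finset.sum_singleton, GammaA_f]

lemma load_zero_pointwise (hp0 : 0 < p) (hp1 : p < 1)
    {σ : Game.Profile (PlA l k) (ResA l)} {u : PlA l k} {e : ResA l}
    (hS : (GammaA φ p).selfLoadEx σ u e ≤ 0) (hM : (GammaA φ p).malLoadEx σ u e ≤ 0) :
    ∀ v, v ≠ u → e ∉ (σ v).1 ∧ e ∉ (σ v).2 := by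
  have hSnn : ∀ v ∈ Finset.univ.erase u,
      (0:ℝ) ≤ if e ∈ (σ v).1 then 1 - (GammaA φ p).p v else 0 := fun v _ => by
    simp only [GammaA_p]; split_ifs <;> linarith
  have hMnn : ∀ v ∈ Finset.univ.erase u,
      (0:ℝ) ≤ if e ∈ (σ v).2 then (GammaA φ p).p v else 0 := fun v _ => by
    simp only [GammaA_p]; split_ifs <;> linarith
  have hSeq : ∑ v ∈ Finset.univ.erase u, (if e ∈ (σ v).1 then 1 - (GammaA φ p).p v else 0) = 0 :=
    le_antisymm hS (Finset.sum_nonneg hSnn)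
  have hMeq : ∑ v ∈ Finset.univ.erase u, (if e ∈ (σ v).2 then (GammaA φ p).p v else 0) = 0 :=
    le_antisymm hM (Finset.sum_nonneg hMnn)
  have hS' := (Finset.sum_eq_zero_iff_of_nonneg hSnn).1 hSeq
  have hM' := (Finset.sum_eq_zero_iff_of_nonneg hMnn).1 hMeq
  intro v hv
  have hvmem : v ∈ Finset.univ.erase u := Finset.mem_erase.2 ⟨hv, Finset.mem_univ v⟩
  constructor
  · intro hmem
    have := hS' v hvmem
    rw [if_pos hmem] at this
    simp only [GammaA_p] at this
    linarith
  · intro hmem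
    have := hM' v hvmem
    rw [if_pos hmem] at this
    simp only [GammaA_p] at this
    linarith

lemma denom_pos (hp1 : p < 1) :
    0 < ((Fintype.card (PlA l k) : ℝ) - ∑ w, (GammaA φ p).p w) := by
  have hcard : 0 < Fintype.card (PlA l k) := Fintype.card_pos_iff.2 ⟨PlA.u0⟩
  have hsum : ∑ w : PlA l k, (GammaA φ p).p w = (Fintype.card (PlA l k) : ℝ) * p := by
    simp only [GammaA_p, Finset.sum_const, Finset.card_univ, nsmul_eq_mul]
  rw [hsum]
  have h1 : (1:ℝ) ≤ (Fintype.card (PlA l k) : ℝ) := by exact_mod_cast hcard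
  nlinarith

end AuxSteps


section MainSteps

set_option linter.unusedSectionVars false
set_option maxHeartbeats 1000000

variable {l k : ℕ} {φ : Formula l k} {p : ℝ}

lemma step_u2 (hl : 1 ≤ l) (hp0 : 0 < p) (hp1 : p < 1)
    {σ : Game.Profile (PlA l k) (ResA l)} (hval : (GammaA φ p).Valid σ)
    (hbne : ∀ u : PlA l k, ∀ t ∈ (GammaA φ p).S u,
      (GammaA φ p).PC σ u ≤ (GammaA φ p).PC (Game.updS σ u t) u ∧
        (GammaA φ p).SC (Game.updM σ u t) ≤ (GammaA φ p).SC σ) :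
    (σ PlA.u2).1 = {ResA.e4} ∧
      ∀ v, v ≠ PlA.u2 → ResA.e4 ∉ (σ v).1 ∧ ResA.e4 ∉ (σ v).2 := by
  have h01 : (σ PlA.u0).1 = {ResA.e0} := by
    have := (hval PlA.u0).1; rwa [GammaA_S_u0, Finset.mem_singleton] at this
  have h02 : (σ PlA.u0).2 = {ResA.e0} := by
    have := (hval PlA.u0).2; rwa [GammaA_S_u0, Finset.mem_singleton] at this
  have h11 := (hval PlA.u1).1
  have h12 := (hval PlA.u1).2
  rw [GammaA_S_u1] at h11 h12
  simp only [Finset.mem_insert, Finset.mem_singleton] at h11 h12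
  -- a resource among e1,e2,e3 free of u1's agents
  obtain ⟨c, hcS, hc1, hc2, hc123⟩ :
      ∃ c : ResA l, ({c} ∈ (GammaA φ p).S PlA.u2) ∧ c ∉ (σ PlA.u1).1 ∧ c ∉ (σ PlA.u1).2 ∧
        (c = ResA.e1 ∨ c = ResA.e2 ∨ c = ResA.e3) := by
    rcases h11 with h | h | h <;> rcases h12 with h' | h' | h'
    · exact ⟨ResA.e3, by rw [GammaA_S_u2]; simp, by rw [h]; simp, by rw [h']; simp, by simp⟩
    · exact ⟨ResA.e3, by rw [GammaA_S_u2]; simp, by rw [h]; simp, by rw [h']; simp, by simp⟩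
    · exact ⟨ResA.e2, by rw [GammaA_S_u2]; simp, by rw [h]; simp, by rw [h']; simp, by simp⟩
    · exact ⟨ResA.e3, by rw [GammaA_S_u2]; simp, by rw [h]; simp, by rw [h']; simp, by simp⟩
    · exact ⟨ResA.e3, by rw [GammaA_S_u2]; simp, by rw [h]; simp, by rw [h']; simp, by simp⟩
    · exact ⟨ResA.e1, by rw [GammaA_S_u2]; simp, by rw [h]; simp, by rw [h']; simp, by simp⟩
    · exact ⟨ResA.e2, by rw [GammaA_S_u2]; simp, by rw [h]; simp, by rw [h']; simp, by simp⟩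
    · exact ⟨ResA.e1, by rw [GammaA_S_u2]; simp, by rw [h]; simp, by rw [h']; simp, by simp⟩
    · exact ⟨ResA.e1, by rw [GammaA_S_u2]; simp, by rw [h]; simp, by rw [h']; simp, by simp⟩
  have hfree : ∀ v, v ≠ PlA.u2 → c ∉ (σ v).1 ∧ c ∉ (σ v).2 := by
    intro v hv
    constructor
    · intro hmem
      rcases users_e123 hval hc123 v (Or.inl hmem) with rfl | rfl
      · exact hc1 hmem
      · exact hv rfl
    · intro hmem
      rcases users_e123 hval hc123 v (Or.inr hmem) with rfl | rfl
      · exact hc2 hmem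
      · exact hv rfl
  have hS0 : (GammaA φ p).selfLoadEx σ PlA.u2 c = 0 := by
    unfold Game.selfLoadEx
    exact Finset.sum_eq_zero fun v hv =>
      if_neg (hfree v (Finset.ne_of_mem_erase hv)).1
  have hM0 : (GammaA φ p).malLoadEx σ PlA.u2 c = 0 := by
    unfold Game.malLoadEx
    exact Finset.sum_eq_zero fun v hv =>
      if_neg (hfree v (Finset.ne_of_mem_erase hv)).2
  have hac : aGA l p c = 1 := by rcases hc123 with rfl | rfl | rfl <;> rfl
  have hdev : (GammaA φ p).PC (Game.updS σ PlA.u2 {c}) PlA.u2 = 1 := by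
    rw [PC_updS, Finset.sum_singleton, GammaA_f, hS0, hM0, hac]
    ring
  have hPCle : (GammaA φ p).PC σ PlA.u2 ≤ 1 :=
    (hbne PlA.u2 {c} hcS).1.trans hdev.le
  -- u2 cannot be on e0
  have hl1 : (2:ℝ) ≤ (l:ℝ) + 1 := by
    have : (1:ℝ) ≤ (l:ℝ) := by exact_mod_cast hl
    linarith
  have hne0 : (σ PlA.u2).1 ≠ {ResA.e0} := by
    intro h
    have hPC := PC_singleton (p := p) (φ := φ) h
    have hSge : 1 - p ≤ (GammaA φ p).selfLoadEx σ PlA.u2 ResA.e0 :=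
      single_le_selfLoad (w := PlA.u0) hp1 (by simp) (by rw [h01]; exact Finset.mem_singleton_self _)
    have hMge : p ≤ (GammaA φ p).malLoadEx σ PlA.u2 ResA.e0 :=
      single_le_malLoad (w := PlA.u0) hp0 (by simp) (by rw [h02]; exact Finset.mem_singleton_self _)
    rw [show aGA l p ResA.e0 = (l:ℝ) + 1 from rfl] at hPC
    nlinarith
  -- u2 cannot be on e1, e2, e3
  have hkey : ∀ ej : ResA l, (ej = ResA.e1 ∨ ej = ResA.e2 ∨ ej = ResA.e3) →
      (σ PlA.u2).1 = {ej} → False := by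
    intro ej hej hu2
    have haj : aGA l p ej = 1 := by rcases hej with rfl | rfl | rfl <;> rfl
    have hkey2 : ∀ d : ResA l, (d = ResA.e1 ∨ d = ResA.e2 ∨ d = ResA.e3) →
        (σ PlA.u1).2 = {d} → False := by
      intro d hd hmd
      by_cases hde : d = ej
      · subst hde
        have hMge : p ≤ (GammaA φ p).malLoadEx σ PlA.u2 d :=
          single_le_malLoad (w := PlA.u1) hp0 (by simp) (by rw [hmd]; exact Finset.mem_singleton_self _)
        have hSge := selfLoad_nonneg (φ := φ) hp1 σ PlA.u2 d
        have hPC := PC_singleton (p := p) (φ := φ) hu2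
        rw [haj] at hPC
        nlinarith
      · have hsc := SC_updM_singleton (GammaA φ p) (aGA l p) (fun e x => GammaA_f e x)
          σ PlA.u1 d ej hmd
        have hmem : {ej} ∈ (GammaA φ p).S PlA.u1 := by
          rw [GammaA_S_u1]; rcases hej with rfl | rfl | rfl <;> simp
        have hle := (hbne PlA.u1 {ej} hmem).2
        rw [hsc] at hle
        have hEpos : 0 < ∑ v ∈ Finset.univ.erase PlA.u1, (1 - (GammaA φ p).p v) *
            ((GammaA φ p).p PlA.u1 *
              ((if ej ∈ (σ v).1 then aGA l p ej else 0) -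
                (if d ∈ (σ v).1 then aGA l p d else 0))) := by
          have hzero : ∀ v ∈ Finset.univ.erase PlA.u1,
              (if d ∈ (σ v).1 then aGA l p d else 0) = 0 := by
            intro v hv
            rw [if_neg]
            intro hmem'
            rcases users_e123 hval hd v (Or.inl hmem') with rfl | rfl
            · exact Finset.ne_of_mem_erase hv rfl
            · rw [hu2, Finset.mem_singleton] at hmem'
              exact hde hmem'
          refine Finset.sum_pos' (fun v hv => ?_) ⟨PlA.u2, by simp, ?_⟩
          · rw [hzero v hv]
            simp only [GammaA_p]
            have : (0:ℝ) ≤ (if ej ∈ (σ v).1 then aGA l p ej else 0) := by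
              rw [haj]; split_ifs <;> norm_num
            have h1p : (0:ℝ) ≤ 1 - p := by linarith
            nlinarith [mul_nonneg (mul_nonneg h1p hp0.le) this]
          · rw [hzero PlA.u2 (by simp), if_pos (by rw [hu2]; exact Finset.mem_singleton_self _)]
            simp only [GammaA_p, haj]
            nlinarith
        have hdiv : 0 < (∑ v ∈ Finset.univ.erase PlA.u1, (1 - (GammaA φ p).p v) *
            ((GammaA φ p).p PlA.u1 *
              ((if ej ∈ (σ v).1 then aGA l p ej else 0) -
                (if d ∈ (σ v).1 then aGA l p d else 0)))) /
            ((Fintype.card (PlA l k) : ℝ) - ∑ w, (GammaA φ p).p w) :=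
          div_pos hEpos (denom_pos hp1)
        linarith
    rcases h12 with h | h | h
    · exact hkey2 ResA.e1 (by simp) h
    · exact hkey2 ResA.e2 (by simp) h
    · exact hkey2 ResA.e3 (by simp) h
  -- conclude
  have h21 := (hval PlA.u2).1
  rw [GammaA_S_u2] at h21
  simp only [Finset.mem_insert, Finset.mem_singleton] at h21
  rcases h21 with h | h | h | h | h
  · exact absurd h hne0
  · exact (hkey ResA.e1 (by simp) h).elim
  · exact (hkey ResA.e2 (by simp) h).elim
  · exact (hkey ResA.e3 (by simp) h).elim
  · refine ⟨h, ?_⟩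
    have hPC := PC_singleton (p := p) (φ := φ) h
    rw [show aGA l p ResA.e4 = 1 from rfl] at hPC
    have hSnn := selfLoad_nonneg (φ := φ) hp1 σ PlA.u2 ResA.e4
    have hMnn := malLoad_nonneg (φ := φ) hp0 σ PlA.u2 ResA.e4
    exact load_zero_pointwise hp0 hp1 (by nlinarith) (by nlinarith)


lemma step_u2m (hp0 : 0 < p) (hp1 : p < 1)
    {σ : Game.Profile (PlA l k) (ResA l)} (hval : (GammaA φ p).Valid σ)
    (hbne : ∀ u : PlA l k, ∀ t ∈ (GammaA φ p).S u,
      (GammaA φ p).PC σ u ≤ (GammaA φ p).PC (Game.updS σ u t) u ∧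
        (GammaA φ p).SC (Game.updM σ u t) ≤ (GammaA φ p).SC σ)
    (hE4 : ∀ v, v ≠ PlA.u2 → ResA.e4 ∉ (σ v).1 ∧ ResA.e4 ∉ (σ v).2) :
    ResA.e4 ∉ (σ PlA.u2).2 := by
  intro hmem
  have h01 : (σ PlA.u0).1 = {ResA.e0} := by
    have := (hval PlA.u0).1; rwa [GammaA_S_u0, Finset.mem_singleton] at this
  have h22 := (hval PlA.u2).2
  rw [GammaA_S_u2] at h22
  simp only [Finset.mem_insert, Finset.mem_singleton] at h22
  have h2e4 : (σ PlA.u2).2 = {ResA.e4} := by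
    rcases h22 with h | h | h | h | h <;> rw [h] at hmem <;>
      first
        | exact h
        | (exact absurd (Finset.mem_singleton.1 hmem) (by simp))
  have hsc := SC_updM_singleton (GammaA φ p) (aGA l p) (fun e x => GammaA_f e x)
    σ PlA.u2 ResA.e4 ResA.e0 h2e4
  have hle := (hbne PlA.u2 {ResA.e0} (by rw [GammaA_S_u2]; simp)).2
  rw [hsc] at hle
  have hEpos : 0 < ∑ v ∈ Finset.univ.erase PlA.u2, (1 - (GammaA φ p).p v) *
      ((GammaA φ p).p PlA.u2 *
        ((if ResA.e0 ∈ (σ v).1 then aGA l p ResA.e0 else 0) -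
          (if ResA.e4 ∈ (σ v).1 then aGA l p ResA.e4 else 0))) := by
    have hzero : ∀ v ∈ Finset.univ.erase PlA.u2,
        (if ResA.e4 ∈ (σ v).1 then aGA l p ResA.e4 else 0) = 0 := fun v hv =>
      if_neg (hE4 v (Finset.ne_of_mem_erase hv)).1
    have hl0 : (0:ℝ) ≤ (l:ℝ) + 1 := by positivity
    refine Finset.sum_pos' (fun v hv => ?_) ⟨PlA.u0, by simp, ?_⟩
    · rw [hzero v hv]
      simp only [GammaA_p]
      have hX : (0:ℝ) ≤ (if ResA.e0 ∈ (σ v).1 then aGA l p ResA.e0 else 0) := by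
        rw [show aGA l p ResA.e0 = (l:ℝ) + 1 from rfl]; split_ifs <;> norm_num
        exact hl0
      have h1p : (0:ℝ) ≤ 1 - p := by linarith
      nlinarith [mul_nonneg (mul_nonneg h1p hp0.le) hX]
    · rw [hzero PlA.u0 (by simp), if_pos (by rw [h01]; exact Finset.mem_singleton_self _)]
      simp only [GammaA_p]
      rw [show aGA l p ResA.e0 = (l:ℝ) + 1 from rfl]
      have h1p : (0:ℝ) < 1 - p := by linarith
      have hlp : (0:ℝ) < (l:ℝ) + 1 := by
        have : (0:ℝ) ≤ (l:ℝ) := by positivity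
        linarith
      nlinarith [mul_pos (mul_pos h1p hp0) hlp]
  have hdiv := div_pos hEpos (denom_pos (φ := φ) hp1)
  linarith

lemma step_var (hl : 1 ≤ l) (hp0 : 0 < p) (hp1 : p < 1)
    {σ : Game.Profile (PlA l k) (ResA l)} (hval : (GammaA φ p).Valid σ)
    (hbne : ∀ u : PlA l k, ∀ t ∈ (GammaA φ p).S u,
      (GammaA φ p).PC σ u ≤ (GammaA φ p).PC (Game.updS σ u t) u ∧
        (GammaA φ p).SC (Game.updM σ u t) ≤ (GammaA φ p).SC σ)
    (hu2 : (σ PlA.u2).1 = {ResA.e4})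
    (hE4 : ∀ v, v ≠ PlA.u2 → ResA.e4 ∉ (σ v).1 ∧ ResA.e4 ∉ (σ v).2)
    (hu2m : ResA.e4 ∉ (σ PlA.u2).2) (x : Fin l) :
    ∃ b, (σ (PlA.uvar x)).1 = {ResA.ev x b} ∧
      ∀ v, v ≠ PlA.uvar x → ResA.ev x b ∉ (σ v).1 ∧ ResA.ev x b ∉ (σ v).2 := by
  have h01 : (σ PlA.u0).1 = {ResA.e0} := by
    have := (hval PlA.u0).1; rwa [GammaA_S_u0, Finset.mem_singleton] at this
  have h02 : (σ PlA.u0).2 = {ResA.e0} := by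
    have := (hval PlA.u0).2; rwa [GammaA_S_u0, Finset.mem_singleton] at this
  -- deviation to e4 costs exactly 2 - p
  have hS4 : (GammaA φ p).selfLoadEx σ (PlA.uvar x) ResA.e4 = 1 - p := by
    unfold Game.selfLoadEx
    rw [Finset.sum_eq_single_of_mem PlA.u2 (by simp)]
    · rw [if_pos (by rw [hu2]; exact Finset.mem_singleton_self _), GammaA_p]
    · intro v hv hvne
      exact if_neg (hE4 v hvne).1
  have hM4 : (GammaA φ p).malLoadEx σ (PlA.uvar x) ResA.e4 = 0 := by
    unfold Game.malLoadEx
    refine Finset.sum_eq_zero fun v hv => ?_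
    by_cases hvu : v = PlA.u2
    · subst hvu; exact if_neg hu2m
    · exact if_neg (hE4 v hvu).2
  have hdev : (GammaA φ p).PC (Game.updS σ (PlA.uvar x) {ResA.e4}) (PlA.uvar x) = 2 - p := by
    rw [PC_updS, Finset.sum_singleton, GammaA_f, hS4, hM4,
      show aGA l p ResA.e4 = 1 from rfl]
    ring
  have hPCle : (GammaA φ p).PC σ (PlA.uvar x) ≤ 2 - p :=
    (hbne (PlA.uvar x) {ResA.e4} (by rw [GammaA_S_uvar]; simp)).1.trans hdev.le
  have h1 := (hval (PlA.uvar x)).1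
  rw [GammaA_S_uvar] at h1
  simp only [Finset.mem_insert, Finset.mem_singleton] at h1
  have hl1 : (2:ℝ) ≤ (l:ℝ) + 1 := by
    have : (1:ℝ) ≤ (l:ℝ) := by exact_mod_cast hl
    linarith
  have hgen : ∀ b : Bool, (σ (PlA.uvar x)).1 = {ResA.ev x b} →
      ∀ v, v ≠ PlA.uvar x → ResA.ev x b ∉ (σ v).1 ∧ ResA.ev x b ∉ (σ v).2 := by
    intro b hb
    have hPC := PC_singleton (p := p) (φ := φ) hb
    rw [show aGA l p (ResA.ev x b) = 2 - p from rfl] at hPC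
    have hSnn := selfLoad_nonneg (φ := φ) hp1 σ (PlA.uvar x) (ResA.ev x b)
    have hMnn := malLoad_nonneg (φ := φ) hp0 σ (PlA.uvar x) (ResA.ev x b)
    have hp2 : 0 < 2 - p := by linarith
    exact load_zero_pointwise hp0 hp1 (by nlinarith) (by nlinarith)
  rcases h1 with h | h | h | h
  · exfalso
    have hPC := PC_singleton (p := p) (φ := φ) h
    have hSge : 1 - p ≤ (GammaA φ p).selfLoadEx σ (PlA.uvar x) ResA.e0 :=
      single_le_selfLoad (w := PlA.u0) hp1 (by simp)
        (by rw [h01]; exact Finset.mem_singleton_self _)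
    have hMge : p ≤ (GammaA φ p).malLoadEx σ (PlA.uvar x) ResA.e0 :=
      single_le_malLoad (w := PlA.u0) hp0 (by simp)
        (by rw [h02]; exact Finset.mem_singleton_self _)
    rw [show aGA l p ResA.e0 = (l:ℝ) + 1 from rfl] at hPC
    nlinarith
  · exact absurd (by rw [h]; exact Finset.mem_singleton_self _)
      (hE4 (PlA.uvar x) (by simp)).1
  · exact ⟨false, h, hgen false h⟩
  · exact ⟨true, h, hgen true h⟩


lemma step_cl (hl : 1 ≤ l) (hφ : φ.Restricted) (hp0 : 0 < p) (hp1 : p < 1)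
    {σ : Game.Profile (PlA l k) (ResA l)} (hval : (GammaA φ p).Valid σ)
    (hbne : ∀ u : PlA l k, ∀ t ∈ (GammaA φ p).S u,
      (GammaA φ p).PC σ u ≤ (GammaA φ p).PC (Game.updS σ u t) u ∧
        (GammaA φ p).SC (Game.updM σ u t) ≤ (GammaA φ p).SC σ)
    (hu2 : (σ PlA.u2).1 = {ResA.e4})
    (hE4 : ∀ v, v ≠ PlA.u2 → ResA.e4 ∉ (σ v).1 ∧ ResA.e4 ∉ (σ v).2)
    (hu2m : ResA.e4 ∉ (σ PlA.u2).2) (j : Fin k) :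
    ∃ x b, (x, b) ∈ φ.C j ∧ (σ (PlA.ucl j)).1 = {ResA.ev x b} := by
  have h1 := (hval (PlA.ucl j)).1
  rw [GammaA_S_ucl] at h1
  simp only [Finset.mem_insert, Finset.mem_image] at h1
  rcases h1 with h1 | ⟨a, ha, h1⟩
  · exfalso
    have h01 : (σ PlA.u0).1 = {ResA.e0} := by
      have := (hval PlA.u0).1; rwa [GammaA_S_u0, Finset.mem_singleton] at this
    have h02 : (σ PlA.u0).2 = {ResA.e0} := by
      have := (hval PlA.u0).2; rwa [GammaA_S_u0, Finset.mem_singleton] at this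
    have hPC := PC_singleton (p := p) (φ := φ) h1
    rw [show aGA l p ResA.e0 = (l:ℝ) + 1 from rfl] at hPC
    have hSge : 1 - p ≤ (GammaA φ p).selfLoadEx σ (PlA.ucl j) ResA.e0 :=
      single_le_selfLoad (w := PlA.u0) hp1 (by simp)
        (by rw [h01]; exact Finset.mem_singleton_self _)
    have hMge : p ≤ (GammaA φ p).malLoadEx σ (PlA.ucl j) ResA.e0 :=
      single_le_malLoad (w := PlA.u0) hp0 (by simp)
        (by rw [h02]; exact Finset.mem_singleton_self _)
    have hl1 : (2:ℝ) ≤ (l:ℝ) + 1 := by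
      have : (1:ℝ) ≤ (l:ℝ) := by exact_mod_cast hl
      linarith
    -- pick a literal of the clause
    have hne : (φ.C j).Nonempty := by
      refine Finset.card_pos.1 ?_
      rcases hφ.1 j with h | h <;> omega
    obtain ⟨⟨x, b⟩, hxb⟩ := hne
    obtain ⟨bx, hbx, hfreex⟩ := step_var hl hp0 hp1 hval hbne hu2 hE4 hu2m x
    have hmemt : {ResA.ev x b} ∈ (GammaA φ p).S (PlA.ucl j) := by
      rw [GammaA_S_ucl]
      exact Finset.mem_insert_of_mem (Finset.mem_image_of_mem _ hxb)
    -- bound the load on `ev x b` (excluding the clause player)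
    have hbound : (GammaA φ p).selfLoadEx σ (PlA.ucl j) (ResA.ev x b)
        + (GammaA φ p).malLoadEx σ (PlA.ucl j) (ResA.ev x b) ≤ 1 + p := by
      by_cases hbbx : b = bx
      · subst hbbx
        have hS' : (GammaA φ p).selfLoadEx σ (PlA.ucl j) (ResA.ev x b) = 1 - p := by
          unfold Game.selfLoadEx
          rw [Finset.sum_eq_single_of_mem (PlA.uvar x) (by simp)]
          · rw [if_pos (by rw [hbx]; exact Finset.mem_singleton_self _), GammaA_p]
          · intro v hv hvne
            exact if_neg (hfreex v hvne).1
        have hM' : (GammaA φ p).malLoadEx σ (PlA.ucl j) (ResA.ev x b) ≤ p := by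
          unfold Game.malLoadEx
          rw [Finset.sum_eq_single_of_mem (PlA.uvar x) (by simp)]
          · rw [GammaA_p]; split_ifs <;> linarith
          · intro v hv hvne
            exact if_neg (hfreex v hvne).2
        linarith
      · set F : Finset (Fin k) := (Finset.univ.filter fun j' => (x, b) ∈ φ.C j').erase j
          with hF
        set T : Finset (PlA l k) := F.image PlA.ucl with hT
        have hjF : j ∈ Finset.univ.filter fun j' => (x, b) ∈ φ.C j' :=
          Finset.mem_filter.2 ⟨Finset.mem_univ j, hxb⟩
        have hTcard : T.card ≤ 1 := by
          have h1' : T.card ≤ F.card := Finset.card_image_le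
          have h2' : F.card = (Finset.univ.filter fun j' => (x, b) ∈ φ.C j').card - 1 :=
            Finset.card_erase_of_mem hjF
          have h3' := hφ.2 x b
          omega
        have hsubS : ∀ v, v ≠ PlA.ucl j → ResA.ev x b ∈ (σ v).1 → v ∈ T := by
          intro v hv hmem'
          rcases users_ev hval x b v (Or.inl hmem') with rfl | ⟨j', rfl, hj'⟩
          · rw [hbx, Finset.mem_singleton, ResA.ev.injEq] at hmem'
            exact absurd hmem'.2 hbbx
          · refine Finset.mem_image_of_mem _ (Finset.mem_erase.2 ⟨?_, Finset.mem_filter.2 ⟨Finset.mem_univ j', hj'⟩⟩)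
            intro hh
            exact hv (by rw [hh])
        have hsubM : ∀ v, v ≠ PlA.ucl j → ResA.ev x b ∈ (σ v).2 →
            v ∈ insert (PlA.uvar x) T := by
          intro v hv hmem'
          rcases users_ev hval x b v (Or.inr hmem') with rfl | ⟨j', rfl, hj'⟩
          · exact Finset.mem_insert_self _ _
          · refine Finset.mem_insert_of_mem
              (Finset.mem_image_of_mem _ (Finset.mem_erase.2 ⟨?_, Finset.mem_filter.2 ⟨Finset.mem_univ j', hj'⟩⟩))
            intro hh
            exact hv (by rw [hh])
        have hSle : (GammaA φ p).selfLoadEx σ (PlA.ucl j) (ResA.ev x b)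
            ≤ (T.card : ℝ) * (1 - p) := by
          unfold Game.selfLoadEx
          exact sum_indicator_le _ _ _ T (1 - p) hsubS
            (fun v => by simp [GammaA_p]) (by linarith)
        have hMle : (GammaA φ p).malLoadEx σ (PlA.ucl j) (ResA.ev x b)
            ≤ ((insert (PlA.uvar x) T).card : ℝ) * p := by
          unfold Game.malLoadEx
          exact sum_indicator_le _ _ _ (insert (PlA.uvar x) T) p hsubM
            (fun v => by simp [GammaA_p]) (by linarith)
        have hc1 : (T.card : ℝ) ≤ 1 := by exact_mod_cast hTcard
        have hc2 : ((insert (PlA.uvar x) T).card : ℝ) ≤ 2 := by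
          have := Finset.card_insert_le (PlA.uvar x) T
          have : (insert (PlA.uvar x) T).card ≤ 2 := by omega
          exact_mod_cast this
        have h1p : (0:ℝ) ≤ 1 - p := by linarith
        nlinarith
    -- the deviation is strictly cheaper, contradiction
    have hSnn := selfLoad_nonneg (φ := φ) hp1 σ (PlA.ucl j) (ResA.ev x b)
    have hMnn := malLoad_nonneg (φ := φ) hp0 σ (PlA.ucl j) (ResA.ev x b)
    have hdevle : (GammaA φ p).PC (Game.updS σ (PlA.ucl j) {ResA.ev x b}) (PlA.ucl j)
        ≤ (2 - p) * (2 + p) := by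
      rw [PC_updS, Finset.sum_singleton, GammaA_f,
        show aGA l p (ResA.ev x b) = 2 - p from rfl]
      have h2p : (0:ℝ) ≤ 2 - p := by linarith
      nlinarith
    have hPCge := (hbne (PlA.ucl j) {ResA.ev x b} hmemt).1
    have hSnn0 := selfLoad_nonneg (φ := φ) hp1 σ (PlA.ucl j) ResA.e0
    have hMnn0 := malLoad_nonneg (φ := φ) hp0 σ (PlA.ucl j) ResA.e0
    have hfour : (4:ℝ) ≤ (GammaA φ p).PC σ (PlA.ucl j) := by
      rw [hPC]
      have h2' : (2:ℝ) ≤ (GammaA φ p).selfLoadEx σ (PlA.ucl j) ResA.e0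
          + (GammaA φ p).malLoadEx σ (PlA.ucl j) ResA.e0 + 1 := by linarith
      nlinarith
    nlinarith [mul_pos hp0 hp0]
  · exact ⟨a.1, a.2, by simpa using ha, h1.symm⟩

end MainSteps

theorem gammaA_pure_BNE_implies_satisfiable
    {l k : ℕ} (hl : 1 ≤ l) (hk : 1 ≤ k) (φ : Formula l k) (hφ : φ.Restricted)
    (p : ℝ) (hp0 : 0 < p) (hp1 : p < 1)
    (h : ∃ σ : Game.Profile (PlA l k) (ResA l), (GammaA φ p).IsPureBNE σ) :
    φ.Satisfiable := by
  obtain ⟨σ, hBNE⟩ := h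
  unfold Game.IsPureBNE at hBNE
  obtain ⟨hval, hbne⟩ := hBNE
  obtain ⟨hu2, hE4⟩ := step_u2 hl hp0 hp1 hval hbne
  have hu2m := step_u2m hp0 hp1 hval hbne hE4
  have hvar := fun x => step_var hl hp0 hp1 hval hbne hu2 hE4 hu2m x
  choose bfun hb1 hb2 using hvar
  refine ⟨fun x => !(bfun x), fun j => ?_⟩
  obtain ⟨x, b, hmem, hcl⟩ := step_cl hl hφ hp0 hp1 hval hbne hu2 hE4 hu2m j
  refine ⟨(x, b), hmem, ?_⟩
  have hne : b ≠ bfun x := by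
    intro hbb
    have hmem' : ResA.ev x b ∈ (σ (PlA.ucl j)).1 := by
      rw [hcl]; exact Finset.mem_singleton_self _
    rw [hbb] at hmem'
    exact (hb2 x (PlA.ucl j) (by simp)).1 hmem'
  show (!(bfun x)) = b
  cases hx : bfun x <;> cases hb : b <;> simp_all
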